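/- Let L′ ∈ ℝ^{Gq×p} have rank r with compact singular value decomposition L′ = U′ Σ′ V′ᵀ, where U′ ∈ ℝ^{Gq×r} has orthonormal columns. Let I ⊆ 𝒢, set L₀ := Π_{I^c} L′, and suppose rank(L₀) = r. Let U₀ ∈ ℝ^{Gq×r} have orthonormal columns spanning the column space of L₀. Then for every g ∈ I^c, ‖U′^{(g)}‖_F ≤ ‖U₀^{(g)}‖_F, where X^{(g)} denotes the g-th row block. In particular, if max_{g∈𝒢} ‖U₀^{(g)}‖_F² ≤ μr/G, then max_{g∈I^c} ‖U′^{(g)}‖_F² ≤ μr/G. -/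
import Mathlib


open Matrix

/-- The set of client pairs `𝒢 = {(j,k) : j < k}`. -/
abbrev PairIdx (K : ℕ) := {g : Fin K × Fin K // g.1 < g.2}

/-- Frobenius norm of a real matrix. -/
noncomputable def frob {m n : Type*} [Fintype m] [Fintype n] (A : Matrix m n ℝ) : ℝ :=
  Real.sqrt (∑ i, ∑ j, (A i j) ^ 2)

/-- The 0/1 diagonal matrix `Π_I` selecting the rows of the blocks in `I`. -/
def PiMat (K q : ℕ) (I : Finset (PairIdx K)) :
    Matrix (PairIdx K × Fin q) (PairIdx K × Fin q) ℝ :=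
  Matrix.diagonal fun gi => if gi.1 ∈ I then 1 else 0

/-- The `g`-th row block of a stacked matrix. -/
def blk {K q : ℕ} {n : Type*} [Fintype n] (X : Matrix (PairIdx K × Fin q) n ℝ)
    (g : PairIdx K) : Matrix (Fin q) n ℝ :=
  fun i j => X (g, i) j

lemma dot_mulVec_orth {m n : Type*} [Fintype m] [Fintype n] [DecidableEq n]
    (U : Matrix m n ℝ) (hU : Uᵀ * U = 1) (z : n → ℝ) :
    (U *ᵥ z) ⬝ᵥ (U *ᵥ z) = z ⬝ᵥ z := by
  rw [Matrix.dotProduct_mulVec, ← Matrix.mulVec_transpose, Matrix.mulVec_mulVec, hU,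
    Matrix.one_mulVec]

lemma transpose_contraction {n : Type*} [Fintype n]
    (A : Matrix n n ℝ) (hA : ∀ y : n → ℝ, (A *ᵥ y) ⬝ᵥ (A *ᵥ y) ≤ y ⬝ᵥ y)
    (x : n → ℝ) : (Aᵀ *ᵥ x) ⬝ᵥ (Aᵀ *ᵥ x) ≤ x ⬝ᵥ x := by
  set s := Aᵀ *ᵥ x with hs
  have h1 : s ⬝ᵥ s = x ⬝ᵥ (A *ᵥ s) := by
    rw [hs, Matrix.mulVec_transpose, Matrix.dotProduct_mulVec]
  have hcs : (x ⬝ᵥ (A *ᵥ s)) ^ 2 ≤ (x ⬝ᵥ x) * ((A *ᵥ s) ⬝ᵥ (A *ᵥ s)) := by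
    simpa [dotProduct, pow_two] using
      Finset.sum_mul_sq_le_sq_mul_sq Finset.univ x (A *ᵥ s)
  have hss : (s ⬝ᵥ s) ^ 2 ≤ (x ⬝ᵥ x) * (s ⬝ᵥ s) := by
    calc (s ⬝ᵥ s) ^ 2 = (x ⬝ᵥ (A *ᵥ s)) ^ 2 := by rw [h1]
      _ ≤ (x ⬝ᵥ x) * ((A *ᵥ s) ⬝ᵥ (A *ᵥ s)) := hcs
      _ ≤ (x ⬝ᵥ x) * (s ⬝ᵥ s) := by
          have := hA s
          have hx : 0 ≤ x ⬝ᵥ x := Finset.sum_nonneg fun i _ => mul_self_nonneg _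
          nlinarith
  have hsnn : 0 ≤ s ⬝ᵥ s := Finset.sum_nonneg fun i _ => mul_self_nonneg _
  rcases eq_or_lt_of_le hsnn with h | h
  · rw [← h]; exact Finset.sum_nonneg fun i _ => mul_self_nonneg _
  · nlinarith

lemma range_mul_surj {l m n : Type*} [Fintype l] [Fintype m] [Fintype n]
    (A : Matrix l m ℝ) (B : Matrix m n ℝ)
    (hB : Function.Surjective B.mulVecLin) :
    LinearMap.range (A * B).mulVecLin = LinearMap.range A.mulVecLin := by
  rw [Matrix.mulVecLin_mul, LinearMap.range_comp,
    LinearMap.range_eq_top.mpr hB, Submodule.map_top]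

/-- incoherence transfer, `‖U′^{(g)}‖_F ≤ ‖U₀^{(g)}‖_F` on `I^c`. -/
theorem stmt5 {K q p r : ℕ} (hK : 2 ≤ K) (hq : 1 ≤ q) (hp : 1 ≤ p) (hr : 1 ≤ r)
    (L' : Matrix (PairIdx K × Fin q) (Fin p) ℝ) (hL'rank : L'.rank = r)
    (U' : Matrix (PairIdx K × Fin q) (Fin r) ℝ) (hU' : U'ᵀ * U' = 1)
    (Sig' : Matrix (Fin r) (Fin r) ℝ) (V' : Matrix (Fin p) (Fin r) ℝ)
    (hSVD : L' = U' * Sig' * V'ᵀ)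
    (I : Finset (PairIdx K))
    (hL0rank : ((1 - PiMat K q I) * L').rank = r)
    (U0 : Matrix (PairIdx K × Fin q) (Fin r) ℝ) (hU0 : U0ᵀ * U0 = 1)
    (hU0span : LinearMap.range U0.mulVecLin =
      LinearMap.range ((1 - PiMat K q I) * L').mulVecLin)
    (μ : ℝ) :
    (∀ g : PairIdx K, g ∉ I → frob (blk U' g) ≤ frob (blk U0 g)) ∧
    ((∀ g : PairIdx K, frob (blk U0 g) ^ 2 ≤ μ * r / (Fintype.card (PairIdx K))) →
      ∀ g : PairIdx K, g ∉ I →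
        frob (blk U' g) ^ 2 ≤ μ * r / (Fintype.card (PairIdx K))) := by
  classical
  -- the complementary projector as a diagonal matrix
  have hPdiag : (1 - PiMat K q I) = Matrix.diagonal
      (fun gi : PairIdx K × Fin q => if gi.1 ∈ I then (0:ℝ) else 1) := by
    ext i j
    by_cases hij : i = j
    · subst hij
      by_cases h : i.1 ∈ I <;>
        simp [PiMat, Matrix.sub_apply, Matrix.one_apply, Matrix.diagonal_apply_eq, h]
    · simp [PiMat, Matrix.sub_apply, Matrix.one_apply, hij,
        Matrix.diagonal_apply_ne _ hij]
  -- Sig' * V'ᵀ has rank r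
  have hMrank : (Sig' * V'ᵀ).rank = r := by
    refine le_antisymm ?_ ?_
    · simpa using (Sig' * V'ᵀ).rank_le_card_height
    · have h1 : L'.rank ≤ (Sig' * V'ᵀ).rank := by
        rw [hSVD, Matrix.mul_assoc]
        exact Matrix.rank_mul_le_right _ _
      exact le_of_eq_of_le hL'rank.symm h1
  have hMsurj : Function.Surjective (Sig' * V'ᵀ).mulVecLin := by
    rw [← LinearMap.range_eq_top]
    apply Submodule.eq_top_of_finrank_eq
    rw [show Module.finrank ℝ ↥(LinearMap.range (Sig' * V'ᵀ).mulVecLin)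
        = (Sig' * V'ᵀ).rank from rfl, hMrank]
    simp
  -- range of (1-Π)U' equals range of U0
  have hrange : LinearMap.range ((1 - PiMat K q I) * U').mulVecLin
      = LinearMap.range U0.mulVecLin := by
    rw [hU0span, hSVD]
    have hassoc : (1 - PiMat K q I) * (U' * Sig' * V'ᵀ)
        = ((1 - PiMat K q I) * U') * (Sig' * V'ᵀ) := by
      simp [Matrix.mul_assoc]
    rw [hassoc]
    exact (range_mul_surj _ _ hMsurj).symm
  -- key identity: (1-Π)U' = U0 * A with A := U0ᵀ * ((1-Π)U')
  set A : Matrix (Fin r) (Fin r) ℝ := U0ᵀ * ((1 - PiMat K q I) * U') with hA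
  have hcol : ∀ x : Fin r → ℝ, ((1 - PiMat K q I) * U') *ᵥ x
      = U0 *ᵥ (U0ᵀ *ᵥ (((1 - PiMat K q I) * U') *ᵥ x)) := by
    intro x
    have hv : ((1 - PiMat K q I) * U') *ᵥ x ∈ LinearMap.range U0.mulVecLin := by
      rw [← hrange]; exact ⟨x, rfl⟩
    obtain ⟨y, hy⟩ := hv
    rw [← hy]
    show U0 *ᵥ y = U0 *ᵥ (U0ᵀ *ᵥ (U0 *ᵥ y))
    have hin : U0ᵀ *ᵥ (U0 *ᵥ y) = y := by
      rw [Matrix.mulVec_mulVec, hU0, Matrix.one_mulVec]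
    rw [hin]
  have E : (1 - PiMat K q I) * U' = U0 * A := by
    ext i j
    have h := congrFun (hcol (Pi.single j 1)) i
    rw [Matrix.mulVec_mulVec, Matrix.mulVec_mulVec] at h
    rw [Matrix.mulVec_single_one, Matrix.mulVec_single_one] at h
    simpa [hA, Matrix.mul_assoc] using h
  -- A is a contraction
  have hAcon : ∀ y : Fin r → ℝ, (A *ᵥ y) ⬝ᵥ (A *ᵥ y) ≤ y ⬝ᵥ y := by
    intro y
    have h1 : (A *ᵥ y) ⬝ᵥ (A *ᵥ y) = (U0 *ᵥ (A *ᵥ y)) ⬝ᵥ (U0 *ᵥ (A *ᵥ y)) :=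
      (dot_mulVec_orth U0 hU0 (A *ᵥ y)).symm
    have h2 : U0 *ᵥ (A *ᵥ y) = (1 - PiMat K q I) *ᵥ (U' *ᵥ y) := by
      rw [Matrix.mulVec_mulVec, ← E, ← Matrix.mulVec_mulVec]
    have h3 : ((1 - PiMat K q I) *ᵥ (U' *ᵥ y)) ⬝ᵥ ((1 - PiMat K q I) *ᵥ (U' *ᵥ y))
        ≤ (U' *ᵥ y) ⬝ᵥ (U' *ᵥ y) := by
      rw [hPdiag]
      unfold dotProduct
      refine Finset.sum_le_sum fun i _ => ?_
      rw [Matrix.mulVec_diagonal]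
      by_cases h : i.1 ∈ I
      · simpa [h] using mul_self_nonneg ((U' *ᵥ y) i)
      · simp [h]
    rw [h1, h2]
    exact h3.trans (le_of_eq (dot_mulVec_orth U' hU' y))
  -- blockwise row bound
  have key : ∀ g : PairIdx K, g ∉ I →
      (∑ i, ∑ j, (blk U' g) i j ^ 2) ≤ ∑ i, ∑ j, (blk U0 g) i j ^ 2 := by
    intro g hg
    refine Finset.sum_le_sum fun i _ => ?_
    set x : Fin r → ℝ := fun k => U0 (g, i) k with hx
    have hrow : ∀ j, U' (g, i) j = (Aᵀ *ᵥ x) j := by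
      intro j
      have h1 : U' (g, i) j = (((1 - PiMat K q I) * U' : Matrix (PairIdx K × Fin q) (Fin r) ℝ)) (g, i) j := by
        rw [hPdiag, Matrix.diagonal_mul]
        simp [hg]

      rw [h1, E]
      simp only [Matrix.mul_apply, Matrix.mulVec, dotProduct,
        Matrix.transpose_apply, hx]
      exact Finset.sum_congr rfl fun k _ => mul_comm _ _
    have hb := transpose_contraction A hAcon x
    calc ∑ j, (blk U' g) i j ^ 2
        = (Aᵀ *ᵥ x) ⬝ᵥ (Aᵀ *ᵥ x) := by
          unfold dotProduct
          refine Finset.sum_congr rfl fun j _ => ?_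
          rw [show (blk U' g) i j = U' (g, i) j from rfl, hrow j, pow_two]
      _ ≤ x ⬝ᵥ x := hb
      _ = ∑ j, (blk U0 g) i j ^ 2 := by
          unfold dotProduct
          exact Finset.sum_congr rfl fun j _ => (pow_two _).symm
  have hfrob : ∀ g : PairIdx K, g ∉ I → frob (blk U' g) ≤ frob (blk U0 g) := by
    intro g hg
    exact Real.sqrt_le_sqrt (key g hg)
  refine ⟨hfrob, fun h g hg => ?_⟩
  have h1 : frob (blk U' g) ^ 2 ≤ frob (blk U0 g) ^ 2 :=
    pow_le_pow_left₀ (Real.sqrt_nonneg _) (hfrob g hg) 2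
  exact h1.trans (h g)
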